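/- The Toffoli gate on three qubits can be written as a product of exactly seven two-qubit controlled gates each of which is a controlled-V or controlled-V† gate (with either a positive or a negative control, on some ordered pair of distinct qubits). That is, there exists a list of seven 8×8 matrices, each of the form obtained by embedding a controlled-V or controlled-V† two-qubit gate (possibly negatively controlled) on two of the three qubits, whose product equals TOF. -/

import Mathlib

open Complex Matrix

noncomputable def V : Matrix (Fin 2) (Fin 2) ℂ :=
  !![(1 + I)/2, (1 - I)/2; (1 - I)/2, (1 + I)/2]

/-- The two-qubit controlled gate on three qubits applying the single-qubit operator
`U` to qubit `q` exactly on those basis states where qubit `p` equals the polarity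
`ε`, and acting as the identity elsewhere. Basis states of three qubits are indexed
by functions `Fin 3 → Fin 2`. -/
noncomputable def ctrlGate (p q : Fin 3) (ε : Fin 2) (U : Matrix (Fin 2) (Fin 2) ℂ) :
    Matrix (Fin 3 → Fin 2) (Fin 3 → Fin 2) ℂ :=
  Matrix.of fun i j =>
    if j p = ε then
      (if Function.update i q (j q) = j then U (i q) (j q) else 0)
    else (if i = j then 1 else 0)

/-- The Toffoli gate: it maps the basis state |a,b,c⟩ to |a,b,(a AND b) XOR c⟩;
in `Fin 2`, XOR is addition and AND is multiplication. -/
noncomputable def TOF : Matrix (Fin 3 → Fin 2) (Fin 3 → Fin 2) ℂ :=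
  Matrix.of fun i j =>
    if i = Function.update j 2 (j 0 * j 1 + j 2) then 1 else 0

/- ### Auxiliary: integer (Gaussian) arithmetic versions of the gates -/

abbrev GI := GaussianInt

/-- Integer version of `ctrlGate`, scaled by 2. -/
def hGate (p q : Fin 3) (ε : Fin 2) (W : Matrix (Fin 2) (Fin 2) GI) :
    Matrix (Fin 3 → Fin 2) (Fin 3 → Fin 2) GI :=
  Matrix.of fun i j =>
    if j p = ε then
      (if Function.update i q (j q) = j then W (i q) (j q) else 0)
    else (if i = j then 2 else 0)

def Wv : Matrix (Fin 2) (Fin 2) GI := !![⟨1,1⟩, ⟨1,-1⟩; ⟨1,-1⟩, ⟨1,1⟩]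
def Wvd : Matrix (Fin 2) (Fin 2) GI := !![⟨1,-1⟩, ⟨1,1⟩; ⟨1,1⟩, ⟨1,-1⟩]

/-- Integer Toffoli, scaled by 128. -/
def hTOF : Matrix (Fin 3 → Fin 2) (Fin 3 → Fin 2) GI :=
  Matrix.of fun i j => if i = Function.update j 2 (j 0 * j 1 + j 2) then 128 else 0

def enc : (Fin 3 → Fin 2) → Fin 8 := fun f => ⟨f 0 + 2 * f 1 + 4 * f 2, by omega⟩

def T2 : Matrix (Fin 8) (Fin 8) GI :=
  !![4,0,0,0,0,0,0,0;
     0,(⟨2,2⟩ : GI),0,2,0,0,0,(⟨0,-2⟩ : GI);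
     0,0,(⟨2,2⟩ : GI),0,0,0,(⟨2,-2⟩ : GI),0;
     0,(⟨2,-2⟩ : GI),0,(⟨0,2⟩ : GI),0,0,0,2;
     0,0,0,0,4,0,0,0;
     0,0,0,(⟨0,-2⟩ : GI),0,(⟨2,2⟩ : GI),0,2;
     0,0,(⟨2,-2⟩ : GI),0,0,0,(⟨2,2⟩ : GI),0;
     0,0,0,2,0,(⟨2,-2⟩ : GI),0,(⟨0,2⟩ : GI)]

def T3 : Matrix (Fin 8) (Fin 8) GI :=
  !![8,0,0,0,0,0,0,0;
     0,0,0,(⟨4,4⟩ : GI),0,0,0,(⟨4,-4⟩ : GI);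
     0,0,(⟨4,4⟩ : GI),0,0,0,(⟨4,-4⟩ : GI),0;
     0,8,0,0,0,0,0,0;
     0,0,0,0,8,0,0,0;
     0,0,0,(⟨4,-4⟩ : GI),0,0,0,(⟨4,4⟩ : GI);
     0,0,(⟨4,-4⟩ : GI),0,0,0,(⟨4,4⟩ : GI),0;
     0,0,0,0,0,8,0,0]

def T4 : Matrix (Fin 8) (Fin 8) GI :=
  !![16,0,0,0,0,0,0,0;
     0,0,0,(⟨8,8⟩ : GI),0,0,0,(⟨8,-8⟩ : GI);
     0,0,16,0,0,0,0,0;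
     0,(⟨8,-8⟩ : GI),0,0,0,(⟨8,8⟩ : GI),0,0;
     0,0,0,0,16,0,0,0;
     0,0,0,(⟨8,-8⟩ : GI),0,0,0,(⟨8,8⟩ : GI);
     0,0,0,0,0,0,16,0;
     0,(⟨8,8⟩ : GI),0,0,0,(⟨8,-8⟩ : GI),0,0]

def T5 : Matrix (Fin 8) (Fin 8) GI :=
  !![32,0,0,0,0,0,0,0;
     0,(⟨0,-16⟩ : GI),0,(⟨0,16⟩ : GI),0,16,0,16;
     0,0,32,0,0,0,0,0;
     0,16,0,16,0,(⟨0,16⟩ : GI),0,(⟨0,-16⟩ : GI);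
     0,0,0,0,32,0,0,0;
     0,16,0,16,0,(⟨0,-16⟩ : GI),0,(⟨0,16⟩ : GI);
     0,0,0,0,0,0,32,0;
     0,(⟨0,16⟩ : GI),0,(⟨0,-16⟩ : GI),0,16,0,16]

def T6 : Matrix (Fin 8) (Fin 8) GI :=
  !![64,0,0,0,0,0,0,0;
     0,(⟨32,-32⟩ : GI),0,0,0,(⟨32,32⟩ : GI),0,0;
     0,0,64,0,0,0,0,0;
     0,0,0,(⟨32,32⟩ : GI),0,0,0,(⟨32,-32⟩ : GI);
     0,0,0,0,64,0,0,0;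
     0,(⟨32,32⟩ : GI),0,0,0,(⟨32,-32⟩ : GI),0,0;
     0,0,0,0,0,0,64,0;
     0,0,0,(⟨32,-32⟩ : GI),0,0,0,(⟨32,32⟩ : GI)]


def P2 : Matrix (Fin 3 → Fin 2) (Fin 3 → Fin 2) GI := Matrix.of fun i j => T2 (enc i) (enc j)
def P3 : Matrix (Fin 3 → Fin 2) (Fin 3 → Fin 2) GI := Matrix.of fun i j => T3 (enc i) (enc j)
def P4 : Matrix (Fin 3 → Fin 2) (Fin 3 → Fin 2) GI := Matrix.of fun i j => T4 (enc i) (enc j)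
def P5 : Matrix (Fin 3 → Fin 2) (Fin 3 → Fin 2) GI := Matrix.of fun i j => T5 (enc i) (enc j)
def P6 : Matrix (Fin 3 → Fin 2) (Fin 3 → Fin 2) GI := Matrix.of fun i j => T6 (enc i) (enc j)

set_option maxRecDepth 100000

lemma step2 : hGate 0 1 1 Wv * hGate 1 2 1 Wv = P2 := Matrix.ext (@of_decide_eq_true _ (@Fintype.decidableForallFintype _ _ (fun _ => Fintype.decidableForallFintype) _) rfl)
lemma step3 : hGate 0 1 1 Wv * P2 = P3 := Matrix.ext (@of_decide_eq_true _ (@Fintype.decidableForallFintype _ _ (fun _ => Fintype.decidableForallFintype) _) rfl)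
lemma step4 : hGate 1 2 1 Wvd * P3 = P4 := Matrix.ext (@of_decide_eq_true _ (@Fintype.decidableForallFintype _ _ (fun _ => Fintype.decidableForallFintype) _) rfl)
lemma step5 : hGate 0 1 1 Wv * P4 = P5 := Matrix.ext (@of_decide_eq_true _ (@Fintype.decidableForallFintype _ _ (fun _ => Fintype.decidableForallFintype) _) rfl)
lemma step6 : hGate 0 1 1 Wv * P5 = P6 := Matrix.ext (@of_decide_eq_true _ (@Fintype.decidableForallFintype _ _ (fun _ => Fintype.decidableForallFintype) _) rfl)
lemma step7 : hGate 0 2 1 Wv * P6 = hTOF := Matrix.ext (@of_decide_eq_true _ (@Fintype.decidableForallFintype _ _ (fun _ => Fintype.decidableForallFintype) _) rfl)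

/-- Relating `ctrlGate` to the scaled integer `hGate`. -/
lemma ctrl_eq_hGate (p q : Fin 3) (ε : Fin 2) (U : Matrix (Fin 2) (Fin 2) ℂ)
    (W : Matrix (Fin 2) (Fin 2) GI) (hUW : ∀ a b, U a b = ((1:ℂ)/2) * GaussianInt.toComplex (W a b)) :
    ctrlGate p q ε U = ((1:ℂ)/2) • (hGate p q ε W).map GaussianInt.toComplex := by
  ext i j
  simp only [ctrlGate, hGate, Matrix.smul_apply, Matrix.map_apply, Matrix.of_apply, smul_eq_mul]
  split_ifs with h1 h2 h3
  · exact hUW _ _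
  · simp
  · norm_num [GaussianInt.toComplex_def]
  · simp

lemma hV : ∀ a b, V a b = ((1:ℂ)/2) * GaussianInt.toComplex (Wv a b) := by
  intro a b
  fin_cases a <;> fin_cases b <;>
    simp [V, Wv, GaussianInt.toComplex_def'] <;> ring

lemma hVd : ∀ a b, Vᴴ a b = ((1:ℂ)/2) * GaussianInt.toComplex (Wvd a b) := by
  intro a b
  fin_cases a <;> fin_cases b <;>
    simp [V, Wvd, Matrix.conjTranspose_apply, GaussianInt.toComplex_def'] <;> ring

lemma hTOF_eq : TOF = ((1:ℂ)/128) • hTOF.map GaussianInt.toComplex := by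
  ext i j
  simp only [TOF, hTOF, Matrix.smul_apply, Matrix.map_apply, Matrix.of_apply, smul_eq_mul]
  split_ifs <;> norm_num [GaussianInt.toComplex_def]

lemma smul_map_mul (A B : Matrix (Fin 3 → Fin 2) (Fin 3 → Fin 2) GI) (a b : ℂ) :
    (a • A.map GaussianInt.toComplex) * (b • B.map GaussianInt.toComplex)
      = (a * b) • (A * B).map GaussianInt.toComplex := by
  rw [Matrix.smul_mul, Matrix.mul_smul, smul_smul, Matrix.map_mul]

/-- The Toffoli gate is a product of exactly seven two-qubit controlled-V or
controlled-V† gates, each with a positive or negative control on some ordered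
pair of distinct qubits. -/
theorem toffoli_seven_CV_gates :
    ∃ L : List (Matrix (Fin 3 → Fin 2) (Fin 3 → Fin 2) ℂ),
      L.length = 7 ∧
      (∀ M ∈ L, ∃ (p q : Fin 3) (ε : Fin 2) (U : Matrix (Fin 2) (Fin 2) ℂ),
        p ≠ q ∧ (U = V ∨ U = Vᴴ) ∧ M = ctrlGate p q ε U) ∧
      L.prod = TOF := by
  refine ⟨[ctrlGate 0 2 1 V, ctrlGate 0 1 1 V, ctrlGate 0 1 1 V, ctrlGate 1 2 1 Vᴴ,
      ctrlGate 0 1 1 V, ctrlGate 0 1 1 V, ctrlGate 1 2 1 V], rfl, ?_, ?_⟩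
  · intro M hM
    simp only [List.mem_cons, List.not_mem_nil, or_false] at hM
    rcases hM with h|h|h|h|h|h|h
    · exact ⟨0, 2, 1, V, by decide, Or.inl rfl, h⟩
    · exact ⟨0, 1, 1, V, by decide, Or.inl rfl, h⟩
    · exact ⟨0, 1, 1, V, by decide, Or.inl rfl, h⟩
    · exact ⟨1, 2, 1, Vᴴ, by decide, Or.inr rfl, h⟩
    · exact ⟨0, 1, 1, V, by decide, Or.inl rfl, h⟩
    · exact ⟨0, 1, 1, V, by decide, Or.inl rfl, h⟩
    · exact ⟨1, 2, 1, V, by decide, Or.inl rfl, h⟩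
  · have e1 := ctrl_eq_hGate 1 2 1 V Wv hV
    have e2 := ctrl_eq_hGate 0 1 1 V Wv hV
    have e4 := ctrl_eq_hGate 1 2 1 Vᴴ Wvd hVd
    have e7 := ctrl_eq_hGate 0 2 1 V Wv hV
    simp only [List.prod_cons, List.prod_nil, mul_one]
    rw [e1, e2, e4, e7]
    rw [smul_map_mul, smul_map_mul, smul_map_mul, smul_map_mul, smul_map_mul, smul_map_mul]
    rw [step2, step3, step4, step5, step6, step7, hTOF_eq]
    norm_num
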